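/- Completeness of Lip^{n+1}_q: for all real Banach spaces V₁, V₂, every integer n ≥ 0 and every q ∈ [0,∞), the normed space (Lip^{n+1}_q(V₁,V₂), ‖·‖_{Lip^{n+1}_q(V₁,V₂)}) is complete; i.e., for every sequence (φ_m)_{m∈ℕ} in Lip^{n+1}_q(V₁,V₂) with lim_{m,l→∞} ‖φ_m − φ_l‖_{Lip^{n+1}_q(V₁,V₂)} = 0 there exists φ ∈ Lip^{n+1}_q(V₁,V₂) with lim_{m→∞} ‖φ_m − φ‖_{Lip^{n+1}_q(V₁,V₂)} = 0. -/

import Mathlib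

/-! If `‖φ_m − φ_l‖ → 0`, the derivatives `D^i φ_m`, `i ≤ n`, are uniformly Cauchy on every ball:
the norm bounds `D^i φ(0)` and the weighted Lipschitz constant of `D^n φ`, and descending from
`D^n` with the mean value inequality gives `‖D^i φ(v)‖ ≤ (1+R)^(n-i) (1 + (1+R)^q R) ‖φ‖` for
`‖v‖ ≤ R`. So the `D^i φ_m` converge locally uniformly, and the limit `ψ` is `Cⁿ` with
`D^i ψ = lim D^i φ_m`. Finally the norm is lower semicontinuous under pointwise convergence of the
derivatives involved, whence `‖φ_m − ψ‖ ≤ liminf_l ‖φ_m − φ_l‖`. -/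

open Filter
open scoped ENNReal NNReal Topology

/-- The weighted Lipschitz norm `‖φ‖_{Lip^{n+1}_q} = Σ_{i=0}^{n} ‖φ^{(i)}(0)‖ +
sup_{v≠w} ‖φ^{(n)}(v) − φ^{(n)}(w)‖ / ((1+max(‖v‖,‖w‖))^q ‖v−w‖) ∈ [0,∞]`. -/
noncomputable def LipNorm {V₁ V₂ : Type*} [NormedAddCommGroup V₁] [NormedSpace ℝ V₁]
    [NormedAddCommGroup V₂] [NormedSpace ℝ V₂] (n : ℕ) (q : ℝ) (φ : V₁ → V₂) : ℝ≥0∞ :=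
  (∑ i ∈ Finset.range (n + 1), (‖iteratedFDeriv ℝ i φ 0‖₊ : ℝ≥0∞))
    + ⨆ (v : V₁) (w : V₁) (_ : v ≠ w),
        (‖iteratedFDeriv ℝ n φ v - iteratedFDeriv ℝ n φ w‖₊ : ℝ≥0∞) /
          ENNReal.ofReal ((1 + max ‖v‖ ‖w‖) ^ q * ‖v - w‖)

open Metric

theorem exists_tendstoLocallyUniformly_of_uniformCauchySeqOn {ι α β : Type*} [TopologicalSpace α]
    [UniformSpace β] [CompleteSpace β] {p : Filter ι} [p.NeBot] {F : ι → α → β}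
    (hF : ∀ x, ∃ t ∈ 𝓝 x, UniformCauchySeqOn F p t) :
    ∃ G : α → β, TendstoLocallyUniformly F G p := by
  choose t ht hFt using hF
  choose G hG using fun x => CompleteSpace.complete ((hFt x).cauchy_map (mem_of_mem_nhds (ht x)))
  refine ⟨G, tendstoLocallyUniformly_of_forall_exists_nhds fun x => ⟨t x, ht x, ?_⟩⟩
  exact (hFt x).tendstoUniformlyOn_of_tendsto fun y _ => hG y

section UniformLimits

variable {ι 𝕜 E F : Type*} [RCLike 𝕜] [NormedAddCommGroup E] [NormedSpace 𝕜 E]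
  [NormedAddCommGroup F] [NormedSpace 𝕜 F] {l : Filter ι} [l.NeBot] {n : ℕ} {f : ι → E → F}
  {G : (i : ℕ) → E → E [×i]→L[𝕜] F}

theorem hasFDerivAt_of_tendstoLocallyUniformly_iteratedFDeriv (hf : ∀ k, ContDiff 𝕜 n (f k))
    (hG : ∀ i ≤ n, TendstoLocallyUniformly (fun k => iteratedFDeriv 𝕜 i (f k)) (G i) l)
    {i : ℕ} (hi : i < n) (x : E) :
    HasFDerivAt (G i) (continuousMultilinearCurryLeftEquiv 𝕜 (fun _ : Fin (i + 1) => E) F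
      (G (i + 1) x)) x := by
  have hcurry := (continuousMultilinearCurryLeftEquiv 𝕜 (fun _ : Fin (i + 1) => E) F).isometry
    |>.uniformContinuous.comp_tendstoLocallyUniformly (hG (i + 1) hi)
  refine hasFDerivAt_of_tendstoLocallyUniformlyOn isOpen_univ
    (tendstoLocallyUniformlyOn_univ.2 hcurry) (fun k y _ => ?_)
    (fun y _ => (hG i hi.le).tendstoLocallyUniformlyOn.tendsto_at (Set.mem_univ y))
    (Set.mem_univ x)
  rw [← fderiv_iteratedFDeriv]
  exact ((hf k).differentiable_iteratedFDeriv (mod_cast hi) y).hasFDerivAt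

theorem contDiff_of_tendstoLocallyUniformly_iteratedFDeriv {g : E → F}
    (hf : ∀ k, ContDiff 𝕜 n (f k))
    (hG : ∀ i ≤ n, TendstoLocallyUniformly (fun k => iteratedFDeriv 𝕜 i (f k)) (G i) l)
    (hg : iteratedFDeriv 𝕜 0 g = G 0) :
    ContDiff 𝕜 n g ∧ ∀ i ≤ n, iteratedFDeriv 𝕜 i g = G i := by
  have heq : ∀ i ≤ n, iteratedFDeriv 𝕜 i g = G i := by
    intro i hi
    induction i with
    | zero => exact hg
    | succ i ih =>
      ext1 x
      rw [iteratedFDeriv_succ_eq_comp_left, Function.comp_apply, ih (by omega),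
        (hasFDerivAt_of_tendstoLocallyUniformly_iteratedFDeriv hf hG (by omega) x).fderiv,
        LinearIsometryEquiv.symm_apply_apply]
  refine ⟨contDiff_nat_iff_continuous_differentiable.2 ⟨fun i hi => ?_, fun i hi => ?_⟩, heq⟩
  · rw [heq i hi]
    exact (hG i hi).continuous (Frequently.of_forall fun k => (hf k).continuous_iteratedFDeriv
      (mod_cast hi))
  · rw [heq i hi.le]
    exact fun x =>
      (hasFDerivAt_of_tendstoLocallyUniformly_iteratedFDeriv hf hG hi x).differentiableAt

theorem exists_contDiff_tendsto_iteratedFDeriv [CompleteSpace F] (hf : ∀ k, ContDiff 𝕜 n (f k))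
    (hcauchy : ∀ i ≤ n, ∀ x, ∃ t ∈ 𝓝 x,
      UniformCauchySeqOn (fun k => iteratedFDeriv 𝕜 i (f k)) l t) :
    ∃ g : E → F, ContDiff 𝕜 n g ∧ ∀ i ≤ n, ∀ x,
      Tendsto (fun k => iteratedFDeriv 𝕜 i (f k) x) l (𝓝 (iteratedFDeriv 𝕜 i g x)) := by
  have hlim : ∀ i, ∃ G : E → E [×i]→L[𝕜] F,
      i ≤ n → TendstoLocallyUniformly (fun k => iteratedFDeriv 𝕜 i (f k)) G l := by
    intro i
    by_cases hi : i ≤ n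
    · exact (exists_tendstoLocallyUniformly_of_uniformCauchySeqOn (hcauchy i hi)).imp
        fun _ h _ => h
    · exact ⟨0, fun h => absurd h hi⟩
  choose G hG using hlim
  obtain ⟨hg, heq⟩ :=
    contDiff_of_tendstoLocallyUniformly_iteratedFDeriv (g := fun x => G 0 x 0) hf hG <| by
      ext x m
      rw [iteratedFDeriv_zero_apply, Subsingleton.elim m 0]
  refine ⟨_, hg, fun i hi x => ?_⟩
  rw [heq i hi]
  exact (hG i hi).tendstoLocallyUniformlyOn.tendsto_at (Set.mem_univ x)

end UniformLimits

theorem norm_le_norm_zero_add_of_norm_fderiv_le {E F : Type*} [NormedAddCommGroup E]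
    [NormedSpace ℝ E] [NormedAddCommGroup F] [NormedSpace ℝ F] {f : E → F} {M R : ℝ}
    (hf : Differentiable ℝ f) (hM : ∀ x ∈ closedBall (0 : E) R, ‖fderiv ℝ f x‖ ≤ M)
    {v : E} (hv : ‖v‖ ≤ R) :
    ‖f v‖ ≤ ‖f 0‖ + M * R := by
  have h0 : (0 : E) ∈ closedBall 0 R := mem_closedBall_self ((norm_nonneg v).trans hv)
  have hmv := (convex_closedBall (0 : E) R).norm_image_sub_le_of_norm_fderiv_le
    (fun x _ => hf x) hM h0 (mem_closedBall_zero_iff.2 hv)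
  have hM0 : 0 ≤ M := (norm_nonneg _).trans (hM 0 h0)
  rw [sub_zero] at hmv
  calc ‖f v‖ ≤ ‖f 0‖ + ‖f v - f 0‖ := norm_le_norm_add_norm_sub' _ _
    _ ≤ ‖f 0‖ + M * R := by gcongr; exact hmv.trans (by gcongr)

section LipNorm

variable {V₁ V₂ : Type*} [NormedAddCommGroup V₁] [NormedSpace ℝ V₁]
  [NormedAddCommGroup V₂] [NormedSpace ℝ V₂] {n : ℕ} {q : ℝ} {g : V₁ → V₂}

omit [NormedSpace ℝ V₁] in
theorem lipNorm_denominator_pos (q : ℝ) {v w : V₁} (h : v ≠ w) :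
    0 < (1 + max ‖v‖ ‖w‖) ^ q * ‖v - w‖ :=
  mul_pos (Real.rpow_pos_of_pos (by positivity) q) (norm_pos_iff.2 (sub_ne_zero.2 h))

theorem enorm_iteratedFDeriv_zero_le_lipNorm {i : ℕ} (hi : i ≤ n) :
    ‖iteratedFDeriv ℝ i g 0‖ₑ ≤ LipNorm n q g :=
  le_add_right (Finset.single_le_sum (f := fun j => ‖iteratedFDeriv ℝ j g 0‖ₑ)
    (fun _ _ => zero_le) (Finset.mem_range_succ_iff.2 hi))

theorem enorm_iteratedFDeriv_sub_div_le_lipNorm {v w : V₁} (h : v ≠ w) :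
    ‖iteratedFDeriv ℝ n g v - iteratedFDeriv ℝ n g w‖ₑ /
      ENNReal.ofReal ((1 + max ‖v‖ ‖w‖) ^ q * ‖v - w‖) ≤ LipNorm n q g :=
  le_add_left (le_iSup₂_of_le v w (le_iSup_of_le h le_rfl))

theorem norm_iteratedFDeriv_zero_le_lipNorm (hg : LipNorm n q g ≠ ⊤) {i : ℕ} (hi : i ≤ n) :
    ‖iteratedFDeriv ℝ i g 0‖ ≤ (LipNorm n q g).toReal := by
  simpa using ENNReal.toReal_mono hg (enorm_iteratedFDeriv_zero_le_lipNorm (q := q) (g := g) hi)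

theorem norm_iteratedFDeriv_sub_le_lipNorm (hg : LipNorm n q g ≠ ⊤) (v w : V₁) :
    ‖iteratedFDeriv ℝ n g v - iteratedFDeriv ℝ n g w‖ ≤
      (LipNorm n q g).toReal * ((1 + max ‖v‖ ‖w‖) ^ q * ‖v - w‖) := by
  rcases eq_or_ne v w with rfl | h
  · simp
  have hd := lipNorm_denominator_pos q h
  have hle := (ENNReal.div_le_iff (by simpa using hd) ENNReal.ofReal_ne_top).1
    (enorm_iteratedFDeriv_sub_div_le_lipNorm (n := n) (q := q) (g := g) h)
  have := ENNReal.toReal_mono (ENNReal.mul_ne_top hg ENNReal.ofReal_ne_top) hle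
  rwa [ENNReal.toReal_mul, ENNReal.toReal_ofReal hd.le, toReal_enorm] at this

theorem lipNorm_sub_le {f g : V₁ → V₂} (hf : ContDiff ℝ n f) (hg : ContDiff ℝ n g) :
    LipNorm n q (f - g) ≤ LipNorm n q f + LipNorm n q g := by
  have hD : ∀ i ≤ n, iteratedFDeriv ℝ i (f - g) = iteratedFDeriv ℝ i f - iteratedFDeriv ℝ i g :=
    fun i hi => iteratedFDeriv_sub (hf.of_le (mod_cast hi)) (hg.of_le (mod_cast hi))
  unfold LipNorm
  rw [add_add_add_comm, ← Finset.sum_add_distrib]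
  refine add_le_add (Finset.sum_le_sum fun i hi => ?_) (iSup₂_le fun v w => iSup_le fun hvw => ?_)
  · rw [hD i (Finset.mem_range_succ_iff.1 hi), Pi.sub_apply]
    exact enorm_sub_le
  · rw [hD n le_rfl, Pi.sub_apply, Pi.sub_apply, sub_sub_sub_comm]
    refine (ENNReal.div_le_div_right enorm_sub_le _).trans ?_
    rw [ENNReal.add_div]
    exact add_le_add (le_iSup₂_of_le v w (le_iSup_of_le hvw le_rfl))
      (le_iSup₂_of_le v w (le_iSup_of_le hvw le_rfl))

theorem norm_iteratedFDeriv_le_lipNorm (hq : 0 ≤ q) (hg : ContDiff ℝ n g)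
    (hfin : LipNorm n q g ≠ ⊤) {R : ℝ} {v : V₁} (hv : ‖v‖ ≤ R) {i : ℕ} (hi : i ≤ n) :
    ‖iteratedFDeriv ℝ i g v‖ ≤
      (1 + R) ^ (n - i) * (1 + (1 + R) ^ q * R) * (LipNorm n q g).toReal := by
  set L := (LipNorm n q g).toReal
  have hR : 0 ≤ R := (norm_nonneg v).trans hv
  have hL : 0 ≤ L := ENNReal.toReal_nonneg
  induction hi using Nat.decreasingInduction generalizing v with
  | self =>
    have hlip := norm_iteratedFDeriv_sub_le_lipNorm hfin v 0
    rw [norm_zero, max_eq_left (norm_nonneg v), sub_zero] at hlip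
    calc ‖iteratedFDeriv ℝ n g v‖
        ≤ ‖iteratedFDeriv ℝ n g 0‖ + ‖iteratedFDeriv ℝ n g v - iteratedFDeriv ℝ n g 0‖ :=
          norm_le_norm_add_norm_sub' _ _
      _ ≤ L + L * ((1 + R) ^ q * R) :=
          add_le_add (norm_iteratedFDeriv_zero_le_lipNorm hfin le_rfl) (hlip.trans (by gcongr))
      _ = _ := by rw [Nat.sub_self, pow_zero]; ring
  | of_succ i hi ih =>
    set K := (1 + R) ^ (n - (i + 1)) * (1 + (1 + R) ^ q * R)
    have hK : 1 ≤ K := one_le_mul_of_one_le_of_one_le (one_le_pow₀ (by linarith))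
      (le_add_of_nonneg_right (by positivity))
    have hmv := norm_le_norm_zero_add_of_norm_fderiv_le
      (hg.differentiable_iteratedFDeriv (mod_cast hi))
      (fun x hx => norm_fderiv_iteratedFDeriv.le.trans (ih (mem_closedBall_zero_iff.1 hx))) hv
    calc ‖iteratedFDeriv ℝ i g v‖ ≤ ‖iteratedFDeriv ℝ i g 0‖ + K * L * R := hmv
      _ ≤ K * L + K * L * R := by
          gcongr
          exact (norm_iteratedFDeriv_zero_le_lipNorm hfin hi.le).trans
            (le_mul_of_one_le_left hL hK)
      _ = _ := by rw [show n - i = n - (i + 1) + 1 by omega, pow_succ]; ring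

theorem lipNorm_le_of_tendsto {ι : Type*} {l : Filter ι} [l.NeBot] {g : ι → V₁ → V₂}
    {f : V₁ → V₂} {c : ℝ≥0∞}
    (h0 : ∀ i ≤ n, Tendsto (fun k => iteratedFDeriv ℝ i (g k) 0) l (𝓝 (iteratedFDeriv ℝ i f 0)))
    (hn : ∀ v, Tendsto (fun k => iteratedFDeriv ℝ n (g k) v) l (𝓝 (iteratedFDeriv ℝ n f v)))
    (hc : ∀ᶠ k in l, LipNorm n q (g k) ≤ c) :
    LipNorm n q f ≤ c := by
  have hsum : Tendsto (fun k => ∑ i ∈ Finset.range (n + 1), ‖iteratedFDeriv ℝ i (g k) 0‖ₑ) l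
      (𝓝 (∑ i ∈ Finset.range (n + 1), ‖iteratedFDeriv ℝ i f 0‖ₑ)) :=
    tendsto_finsetSum _ fun i hi => (h0 i (Finset.mem_range_succ_iff.1 hi)).enorm
  have hS := le_of_tendsto hsum (hc.mono fun k hk => le_self_add.trans hk)
  have hS_ne_top : ∑ i ∈ Finset.range (n + 1), ‖iteratedFDeriv ℝ i f 0‖ₑ ≠ ⊤ :=
    ENNReal.sum_ne_top.2 fun _ _ => enorm_ne_top
  refine (add_le_add le_rfl (iSup₂_le fun v w => iSup_le fun hvw =>
    ENNReal.le_sub_of_add_le_left hS_ne_top ?_)).trans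
    (add_tsub_cancel_of_le hS).le
  refine le_of_tendsto
    (hsum.add (ENNReal.Tendsto.div_const ((hn v).sub (hn w)).enorm (Or.inr ?_))) ?_
  · simpa using lipNorm_denominator_pos q hvw
  · exact hc.mono fun k hk =>
      (add_le_add le_rfl (le_iSup₂_of_le v w (le_iSup (fun _ : v ≠ w => _) hvw))).trans hk

variable {φ : ℕ → V₁ → V₂}

theorem uniformCauchySeqOn_iteratedFDeriv_of_lipNorm (hq : 0 ≤ q)
    (hφ : ∀ m, ContDiff ℝ n (φ m))
    (hcauchy : Tendsto (fun p : ℕ × ℕ => LipNorm n q (φ p.1 - φ p.2)) atTop (𝓝 0))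
    {i : ℕ} (hi : i ≤ n) {R : ℝ} (hR : 0 ≤ R) :
    UniformCauchySeqOn (fun m => iteratedFDeriv ℝ i (φ m)) atTop (closedBall 0 R) := by
  set K := (1 + R) ^ (n - i) * (1 + (1 + R) ^ q * R)
  have hK : 0 < K := by positivity
  intro u hu
  obtain ⟨ε, hε, hεu⟩ := Metric.mem_uniformity_dist.1 hu
  rw [← prod_atTop_atTop_eq] at hcauchy
  filter_upwards [hcauchy.eventually (gt_mem_nhds (ENNReal.ofReal_pos.2 (div_pos hε hK)))]
    with p hp x hx
  refine hεu ?_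
  rw [dist_eq_norm, ← iteratedFDeriv_sub_apply ((hφ _).contDiffAt.of_le (mod_cast hi))
    ((hφ _).contDiffAt.of_le (mod_cast hi))]
  calc _ ≤ K * (LipNorm n q (φ p.1 - φ p.2)).toReal :=
        norm_iteratedFDeriv_le_lipNorm hq ((hφ _).sub (hφ _)) hp.ne_top
          (mem_closedBall_zero_iff.1 hx) hi
    _ < K * (ε / K) := by gcongr; exact ENNReal.toReal_lt_of_lt_ofReal hp
    _ = ε := mul_div_cancel₀ _ hK.ne'

theorem tendsto_lipNorm_sub_of_tendsto_iteratedFDeriv {ψ : V₁ → V₂}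
    (hφ : ∀ m, ContDiff ℝ n (φ m)) (hψ : ContDiff ℝ n ψ)
    (hlim : ∀ i ≤ n, ∀ x,
      Tendsto (fun m => iteratedFDeriv ℝ i (φ m) x) atTop (𝓝 (iteratedFDeriv ℝ i ψ x)))
    (hcauchy : Tendsto (fun p : ℕ × ℕ => LipNorm n q (φ p.1 - φ p.2)) atTop (𝓝 0)) :
    Tendsto (fun m => LipNorm n q (φ m - ψ)) atTop (𝓝 0) := by
  have hsub : ∀ m, ∀ i ≤ n, ∀ x, Tendsto (fun l => iteratedFDeriv ℝ i (φ m - φ l) x) atTop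
      (𝓝 (iteratedFDeriv ℝ i (φ m - ψ) x)) := by
    intro m i hi x
    have hCi : ∀ {f : V₁ → V₂}, ContDiff ℝ n f → ContDiffAt ℝ i f x :=
      fun hf => hf.contDiffAt.of_le (mod_cast hi)
    rw [iteratedFDeriv_sub_apply (hCi (hφ m)) (hCi hψ)]
    exact (tendsto_const_nhds.sub (hlim i hi x)).congr fun l =>
      (iteratedFDeriv_sub_apply (hCi (hφ m)) (hCi (hφ l))).symm
  refine ENNReal.tendsto_nhds_zero.2 fun ε hε => ?_
  obtain ⟨N, hN⟩ := eventually_atTop_prod_self'.1 (ENNReal.tendsto_nhds_zero.1 hcauchy ε hε)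
  filter_upwards [eventually_ge_atTop N] with m hm
  exact lipNorm_le_of_tendsto (fun i hi => hsub m i hi 0) (hsub m n le_rfl)
    ((eventually_ge_atTop N).mono fun l hl => hN m hm l hl)

end LipNorm

theorem LipNorm_complete_general {V₁ V₂ : Type*}
    [NormedAddCommGroup V₁] [NormedSpace ℝ V₁]
    [NormedAddCommGroup V₂] [NormedSpace ℝ V₂] [CompleteSpace V₂]
    (n : ℕ) (q : ℝ) (hq : 0 ≤ q)
    (φ : ℕ → V₁ → V₂)
    (hmem : ∀ m : ℕ, ContDiff ℝ n (φ m) ∧ LipNorm n q (φ m) < ⊤)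
    (hcauchy : Tendsto (fun p : ℕ × ℕ => LipNorm n q (φ p.1 - φ p.2)) atTop (𝓝 0)) :
    ∃ ψ : V₁ → V₂, ContDiff ℝ n ψ ∧ LipNorm n q ψ < ⊤ ∧
      Tendsto (fun m : ℕ => LipNorm n q (φ m - ψ)) atTop (𝓝 0) := by
  have hφ : ∀ m, ContDiff ℝ n (φ m) := fun m => (hmem m).1
  obtain ⟨ψ, hψ, hlim⟩ := exists_contDiff_tendsto_iteratedFDeriv hφ fun i hi x =>
    ⟨closedBall 0 (‖x‖ + 1), closedBall_mem_nhds_of_mem (mem_ball_zero_iff.2 (lt_add_one _)),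
      uniformCauchySeqOn_iteratedFDeriv_of_lipNorm hq hφ hcauchy hi (by positivity)⟩
  have hconv := tendsto_lipNorm_sub_of_tendsto_iteratedFDeriv hφ hψ hlim hcauchy
  obtain ⟨m, hm⟩ := (hconv.eventually (gt_mem_nhds one_pos)).exists
  refine ⟨ψ, hψ, ?_, hconv⟩
  calc LipNorm n q ψ = LipNorm n q (φ m - (φ m - ψ)) := by rw [sub_sub_cancel]
    _ ≤ LipNorm n q (φ m) + LipNorm n q (φ m - ψ) := lipNorm_sub_le (hφ m) ((hφ m).sub hψ)
    _ < ⊤ := ENNReal.add_lt_top.2 ⟨(hmem m).2, hm.trans ENNReal.one_lt_top⟩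

/-- **Completeness of `Lip^{n+1}_q`**: every sequence in
`Lip^{n+1}_q(V₁,V₂) = {φ ∈ Cⁿ : ‖φ‖_{Lip^{n+1}_q} < ∞}` which is Cauchy with respect to
`‖·‖_{Lip^{n+1}_q}` converges in the `‖·‖_{Lip^{n+1}_q}`-sense to an element of
`Lip^{n+1}_q(V₁,V₂)`. -/
theorem LipNorm_complete {V₁ V₂ : Type*}
    [NormedAddCommGroup V₁] [NormedSpace ℝ V₁] [CompleteSpace V₁]
    [NormedAddCommGroup V₂] [NormedSpace ℝ V₂] [CompleteSpace V₂]
    (n : ℕ) (q : ℝ) (hq : 0 ≤ q)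
    (φ : ℕ → V₁ → V₂)
    (hmem : ∀ m : ℕ, ContDiff ℝ n (φ m) ∧ LipNorm n q (φ m) < ⊤)
    (hcauchy : Tendsto (fun p : ℕ × ℕ => LipNorm n q (φ p.1 - φ p.2)) atTop (𝓝 0)) :
    ∃ ψ : V₁ → V₂, ContDiff ℝ n ψ ∧ LipNorm n q ψ < ⊤ ∧
      Tendsto (fun m : ℕ => LipNorm n q (φ m - ψ)) atTop (𝓝 0) :=
  LipNorm_complete_general n q hq φ hmem hcauchy
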